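/- Let n ≥ m ≥ k ≥ 1 and let A be an m × n matrix with entries in {0,1}. Then ‖A‖_{F_k} ≤ (1 + √k)√(mn)/2. -/

import Mathlib

open Finset

/-- Singular values (unsorted) of a complex matrix: square roots of eigenvalues of `A * Aᴴ`. -/
noncomputable def svalC {m n : ℕ} (A : Matrix (Fin m) (Fin n) ℂ) : Fin m → ℝ :=
  fun i => Real.sqrt ((Matrix.isHermitian_mul_conjTranspose_self A).eigenvalues i)

/-- Singular values of a complex matrix sorted in decreasing order. -/
noncomputable def svalCSorted {m n : ℕ} (A : Matrix (Fin m) (Fin n) ℂ) : Fin m → ℝ :=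
  svalC A ∘ ⇑(Tuple.sort (fun i => -(svalC A i)))

/-- Singular values (unsorted) of a real matrix. -/
noncomputable def svalR {m n : ℕ} (A : Matrix (Fin m) (Fin n) ℝ) : Fin m → ℝ :=
  fun i => Real.sqrt ((Matrix.isHermitian_mul_conjTranspose_self A).eigenvalues i)

/-- Singular values of a real matrix sorted in decreasing order. -/
noncomputable def svalRSorted {m n : ℕ} (A : Matrix (Fin m) (Fin n) ℝ) : Fin m → ℝ :=
  svalR A ∘ ⇑(Tuple.sort (fun i => -(svalR A i)))

/-- Ky Fan `k`-norm of a complex matrix: the sum of its `k` largest singular values. -/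
noncomputable def kyFanC {m n : ℕ} (A : Matrix (Fin m) (Fin n) ℂ) (k : ℕ) : ℝ :=
  ∑ i : Fin m, if (i : ℕ) < k then svalCSorted A i else 0

/-- Ky Fan `k`-norm of a real matrix. -/
noncomputable def kyFanR {m n : ℕ} (A : Matrix (Fin m) (Fin n) ℝ) (k : ℕ) : ℝ :=
  ∑ i : Fin m, if (i : ℕ) < k then svalRSorted A i else 0

/-- The adjacency matrix of a simple graph is Hermitian (over `ℝ`). -/
lemma adjHerm {n : ℕ} (G : SimpleGraph (Fin n)) [DecidableRel G.Adj] :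
    (G.adjMatrix ℝ).IsHermitian := by
  have h := G.isSymm_adjMatrix (α := ℝ)
  simpa [Matrix.IsHermitian, Matrix.conjTranspose_eq_transpose_of_trivial, Matrix.IsSymm] using h

/-- Singular values of a graph (unsorted). -/
noncomputable def gsval {n : ℕ} (G : SimpleGraph (Fin n)) [DecidableRel G.Adj] : Fin n → ℝ :=
  svalR (G.adjMatrix ℝ)

/-- Singular values of a graph sorted in decreasing order. -/
noncomputable def gsvalSorted {n : ℕ} (G : SimpleGraph (Fin n)) [DecidableRel G.Adj] : Fin n → ℝ :=
  svalRSorted (G.adjMatrix ℝ)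

/-- Eigenvalues of a graph sorted in decreasing order: `geigSorted G 0 = μ₁ ≥ ⋯ ≥ μₙ`. -/
noncomputable def geigSorted {n : ℕ} (G : SimpleGraph (Fin n)) [DecidableRel G.Adj] : Fin n → ℝ :=
  (adjHerm G).eigenvalues ∘ ⇑(Tuple.sort (fun i => -((adjHerm G).eigenvalues i)))

/-- Ky Fan `k`-norm of a graph. -/
noncomputable def kyFanG {n : ℕ} (G : SimpleGraph (Fin n)) [DecidableRel G.Adj] (k : ℕ) : ℝ :=
  kyFanR (G.adjMatrix ℝ) k

/-! Let `σ₁ ≥ σ₂ ≥ ⋯` be the singular values of `A` and `s = ∑ A i j`. Since the entries are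
0 or 1, `∑ σᵢ² = ‖A‖_F² = s`, and testing `A` against the all-ones vectors gives
`s = 𝟙ᵀ A 𝟙 ≤ σ₁ √(mn)`. Cauchy–Schwarz on `σ₂, …, σ_k` bounds the Ky Fan norm by
`σ₁ + √((k - 1)(s - σ₁²)) ≤ σ₁ + √((k - 1)(σ₁ √(mn) - σ₁²))`, and maximizing over `σ₁` gives
`(1 + √k) √(mn) / 2`. -/

open Matrix
open scoped MatrixOrder

lemma Matrix.IsHermitian.dotProduct_mulVec_le {ι : Type*} [Fintype ι] [DecidableEq ι]
    {M : Matrix ι ι ℝ} (hM : M.IsHermitian) {c : ℝ} (hc : ∀ i, hM.eigenvalues i ≤ c)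
    (x : ι → ℝ) : x ⬝ᵥ (M *ᵥ x) ≤ c * (x ⬝ᵥ x) := by
  have hle : M ≤ algebraMap ℝ _ c := by
    refine le_algebraMap_of_spectrum_le (fun r hr => ?_) hM.isSelfAdjoint
    obtain ⟨i, rfl⟩ := hM.spectrum_real_eq_range_eigenvalues ▸ hr
    exact hc i
  have := (Matrix.le_iff.mp hle).dotProduct_mulVec_nonneg x
  simp only [Algebra.algebraMap_eq_smul_one, sub_mulVec, smul_mulVec, one_mulVec,
    dotProduct_sub, dotProduct_smul, smul_eq_mul, star_trivial] at this
  linarith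

section SingularValues

variable {m n : ℕ} (A : Matrix (Fin m) (Fin n) ℝ)

lemma svalR_sq (i : Fin m) :
    svalR A i ^ 2 = (isHermitian_mul_conjTranspose_self A).eigenvalues i :=
  Real.sq_sqrt (eigenvalues_self_mul_conjTranspose_nonneg A i)

lemma sum_svalR_sq : ∑ i, svalR A i ^ 2 = ∑ i, ∑ j, A i j ^ 2 := by
  simp only [svalR_sq]
  rw [← RCLike.ofReal_inj (K := ℝ), RCLike.ofReal_sum,
    ← (isHermitian_mul_conjTranspose_self A).trace_eq_sum_eigenvalues]
  simp [trace, mul_apply, sq]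

lemma svalRSorted_nonneg (i : Fin m) : 0 ≤ svalRSorted A i := Real.sqrt_nonneg _

lemma antitone_svalRSorted : Antitone (svalRSorted A) := fun _ _ hij =>
  neg_le_neg_iff.mp (Tuple.monotone_sort (fun i => -svalR A i) hij)

lemma sum_svalRSorted_sq : ∑ i, svalRSorted A i ^ 2 = ∑ i, ∑ j, A i j ^ 2 :=
  (Equiv.sum_comp _ fun i => svalR A i ^ 2).trans (sum_svalR_sq A)

lemma svalR_le_svalRSorted_zero (hm : 0 < m) (i : Fin m) :
    svalR A i ≤ svalRSorted A ⟨0, hm⟩ := by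
  have := antitone_svalRSorted A
    (show (⟨0, hm⟩ : Fin m) ≤ (Tuple.sort fun i => -svalR A i).symm i from Nat.zero_le _)
  simpa [svalRSorted] using this

lemma dotProduct_vecMul_self_le (hm : 0 < m) (x : Fin m → ℝ) :
    (x ᵥ* A) ⬝ᵥ (x ᵥ* A) ≤ svalRSorted A ⟨0, hm⟩ ^ 2 * (x ⬝ᵥ x) := by
  have key := (isHermitian_mul_conjTranspose_self A).dotProduct_mulVec_le
    (c := svalRSorted A ⟨0, hm⟩ ^ 2) (fun i => ?_) x
  · rwa [← mulVec_mulVec, dotProduct_mulVec, conjTranspose_eq_transpose_of_trivial,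
      ← vecMul_transpose, transpose_transpose] at key
  · rw [← svalR_sq]
    exact pow_le_pow_left₀ (Real.sqrt_nonneg _) (svalR_le_svalRSorted_zero A hm i) 2

lemma sum_entries_le_svalRSorted_mul_sqrt (hm : 0 < m) :
    ∑ i, ∑ j, A i j ≤ svalRSorted A ⟨0, hm⟩ * Real.sqrt (m * n) := by
  set y : Fin n → ℝ := (fun _ => 1) ᵥ* A
  have hy : ∑ j, y j = ∑ i, ∑ j, A i j := by
    simp only [y, vecMul, dotProduct, one_mul]
    exact Finset.sum_comm
  have hsq : (∑ j, y j) ^ 2 ≤ (svalRSorted A ⟨0, hm⟩ * Real.sqrt (m * n)) ^ 2 := by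
    calc (∑ j, y j) ^ 2 ≤ n * ∑ j, y j ^ 2 := by
          simpa using sq_sum_le_card_mul_sum_sq (s := univ) (f := y)
      _ = n * (y ⬝ᵥ y) := by simp [dotProduct, sq]
      _ ≤ n * (svalRSorted A ⟨0, hm⟩ ^ 2 * m) := by
        gcongr
        have hones : (fun _ => (1 : ℝ)) ⬝ᵥ (fun _ : Fin m => 1) = m := by simp [dotProduct]
        simpa only [hones] using dotProduct_vecMul_self_le A hm (fun _ => 1)
      _ = _ := by rw [mul_pow, Real.sq_sqrt (by positivity)]; ring
  rw [← hy]
  exact le_of_sq_le_sq hsq (mul_nonneg (svalRSorted_nonneg A _) (Real.sqrt_nonneg _))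

end SingularValues

lemma sq_sum_erase_le {ι : Type*} [Fintype ι] [DecidableEq ι] (f : ι → ℝ) {S : Finset ι}
    {a : ι} {k : ℕ} (ha : a ∈ S) (hS : #S ≤ k) :
    (∑ i ∈ S.erase a, f i) ^ 2 ≤ (k - 1) * (∑ i, f i ^ 2 - f a ^ 2) := by
  have hcard : (#(S.erase a) : ℝ) ≤ k - 1 := by
    have : (#(S.erase a) : ℝ) + 1 ≤ k := by exact_mod_cast (card_erase_add_one ha).trans_le hS
    linarith
  have htail : ∑ i ∈ S.erase a, f i ^ 2 ≤ ∑ i, f i ^ 2 - f a ^ 2 := by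
    rw [← add_sum_erase _ _ (mem_univ a), add_sub_cancel_left]
    exact sum_le_sum_of_subset_of_nonneg (erase_subset_erase a (subset_univ S))
      fun i _ _ => sq_nonneg (f i)
  calc (∑ i ∈ S.erase a, f i) ^ 2 ≤ #(S.erase a) * ∑ i ∈ S.erase a, f i ^ 2 :=
        sq_sum_le_card_mul_sum_sq
    _ ≤ (k - 1) * (∑ i, f i ^ 2 - f a ^ 2) :=
        mul_le_mul hcard htail (sum_nonneg fun i _ => sq_nonneg (f i))
          (by linarith [sq_nonneg (f a), sum_nonneg fun i (_ : i ∈ S.erase a) => sq_nonneg (f i)])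

/-- With `K = √k`, this comes from the identity
`((1 + K) N - 2 x) ^ 2 - 4 (K ^ 2 - 1) (x N - x ^ 2) = ((1 + K) N - 2 K x) ^ 2`. -/
lemma add_le_one_add_sqrt_mul_div_two {k : ℕ} {x y s N : ℝ} (hk : 1 ≤ k)
    (hN : 0 ≤ N) (hxs : x ^ 2 ≤ s) (hsN : s ≤ x * N) (hy : y ^ 2 ≤ (k - 1) * (s - x ^ 2)) :
    x + y ≤ (1 + Real.sqrt k) * N / 2 := by
  set K := Real.sqrt k
  have hK2 : K ^ 2 = k := Real.sq_sqrt (Nat.cast_nonneg k)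
  have hK1 : 1 ≤ K := Real.one_le_sqrt.mpr (by exact_mod_cast hk)
  have hxN : x ≤ N := by nlinarith
  have hK21 : 0 ≤ K ^ 2 - 1 := by nlinarith
  rw [← hK2] at hy
  have hsq : (2 * y) ^ 2 ≤ ((1 + K) * N - 2 * x) ^ 2 := by
    nlinarith [sq_nonneg ((1 + K) * N - 2 * K * x), mul_nonneg hK21 (sub_nonneg.mpr hsN)]
  linarith [(abs_le_of_sq_le_sq' hsq (by nlinarith)).2]

theorem kyFan_le_zero_one_general {m n k : ℕ} (hk : 1 ≤ k) (hkm : k ≤ m)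
    (A : Matrix (Fin m) (Fin n) ℝ) (h01 : ∀ i j, A i j = 0 ∨ A i j = 1) :
    kyFanR A k ≤ (1 + Real.sqrt k) * Real.sqrt ((m : ℝ) * n) / 2 := by
  have hm : 0 < m := lt_of_lt_of_le hk hkm
  set σ₁ := svalRSorted A ⟨0, hm⟩
  set S : Finset (Fin m) := univ.filter fun i => (i : ℕ) < k
  have h0S : ⟨0, hm⟩ ∈ S := by simp [S]; omega
  have hSk : #S ≤ k := by
    simpa using card_le_card_of_injOn (t := range k) Fin.val (by simp [S, Set.MapsTo])
      Fin.val_injective.injOn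
  have hsq : ∀ i j, A i j ^ 2 = A i j := fun i j => by rcases h01 i j with h | h <;> simp [h]
  have hsum : ∑ i, svalRSorted A i ^ 2 = ∑ i, ∑ j, A i j := by
    simp only [sum_svalRSorted_sq, hsq]
  have hσ₁ : σ₁ ^ 2 ≤ ∑ i, ∑ j, A i j :=
    hsum ▸ single_le_sum (fun i _ => sq_nonneg (svalRSorted A i)) (mem_univ _)
  rw [kyFanR, ← sum_filter, ← add_sum_erase S _ h0S]
  exact add_le_one_add_sqrt_mul_div_two hk (Real.sqrt_nonneg _) hσ₁
    (sum_entries_le_svalRSorted_mul_sqrt A hm) (hsum ▸ sq_sum_erase_le _ h0S hSk)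

/-- Ky Fan norm of a `(0,1)`-matrix: `‖A‖_{F_k} ≤ (1 + √k)√(mn)/2`. -/
theorem kyFan_le_zero_one {m n k : ℕ} (hk : 1 ≤ k) (hkm : k ≤ m) (hmn : m ≤ n)
    (A : Matrix (Fin m) (Fin n) ℝ) (h01 : ∀ i j, A i j = 0 ∨ A i j = 1) :
    kyFanR A k ≤ (1 + Real.sqrt k) * Real.sqrt ((m : ℝ) * n) / 2 :=
  kyFan_le_zero_one_general hk hkm A h01
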